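/- arXiv:2305.06732 — 2 statements merged into one kernel-verified Lean document; each statement's English description precedes it below -/
import Mathlib

section
/- Fix d ≥ 1 and let w := (−3, 1, 1, …, 1) ∈ ℝ^{d+1}. Let A_+ := {v ∈ {0,1}^{d+1} : ⟨v, w⟩ > 0} and z := Σ_{v ∈ A_+} v. Then for every b ∈ ℕ^d whose coordinate sum ‖b‖₁ is divisible by 3, the following are equivalent: (i) b is the degree sequence of a 3-uniform hypergraph on d vertices, i.e. b is the sum of a set of pairwise distinct vectors in {0,1}^d each having exactly three coordinates equal to one; (ii) the integer point z + (‖b‖₁/3, b_1, …, b_d) ∈ ℤ^{d+1} is a degree sequence (belongs to S in dimension d+1). -/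
open Finset

/-- The 0/1 vector in `ℝ^n` corresponding to a Boolean vector. -/
noncomputable def toVec {n : ℕ} (v : Fin n → Bool) : Fin n → ℝ :=
  fun i => if v i then 1 else 0

/-- The set `S` of degree sequences of hypergraphs on `n` vertices:
sums of sets of pairwise distinct 0/1 vectors. -/
def degSeqs (n : ℕ) : Set (Fin n → ℝ) :=
  {b | ∃ U : Finset (Fin n → Bool), b = ∑ v ∈ U, toVec v}

/-- The degree-sequence polytope `Z^n`. -/
def dsPolytope (n : ℕ) : Set (Fin n → ℝ) :=
  {p | ∃ c : (Fin n → Bool) → ℝ, (∀ v, 0 ≤ c v ∧ c v ≤ 1) ∧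
    p = ∑ v : Fin n → Bool, c v • toVec v}
/-- The vector `w = (-3, 1, …, 1) ∈ ℝ^(d+1)` (it has integer entries). -/
def wVec (d : ℕ) : Fin (d + 1) → ℤ :=
  fun i => if i = 0 then -3 else 1

/-- `z = ∑_{v ∈ A₊} v`, where `A₊ = {v ∈ {0,1}^(d+1) : ⟨v, w⟩ > 0}`. -/
noncomputable def zVec (d : ℕ) : Fin (d + 1) → ℝ :=
  ∑ v ∈ Finset.univ.filter
      (fun v : Fin (d + 1) → Bool => 0 < ∑ i, wVec d i * (if v i then 1 else 0)),
    toVec v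

/-!
The linear form `⟨w, ·⟩` vanishes at `(‖b‖₁/3, b)`, and `z` is the sum of the 0/1 vectors on which
it is positive, so `z` maximises `⟨w, ·⟩` over `S`. Hence a set `U` of 0/1 vectors summing to
`z + (‖b‖₁/3, b)` attains this maximum: it contains `A₊`, and the rest of `U` lies on the hyperplane
`⟨w, v⟩ = 0`, whose 0/1 points are `0` and the vectors `(1, e)` with `e` the indicator of a 3-set.
Dropping the leading `1` gives the hypergraph; conversely `A₊ ∪ {(1, e)}` realises the shifted
point.
-/

theorem Finset.subset_and_eq_zero_of_sum_eq_sum_filter_pos {α R : Type*} [Fintype α]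
    [AddCommGroup R] [LinearOrder R] [IsOrderedAddMonoid R] (f : α → R) {U : Finset α}
    (h : ∑ v ∈ U, f v = ∑ v with 0 < f v, f v) :
    ({v | 0 < f v} : Finset α) ⊆ U ∧ ∀ v ∈ U, ¬ 0 < f v → f v = 0 := by
  classical
  set P : Finset α := {v | 0 < f v}
  have hswap : ∑ v ∈ P \ U, f v = ∑ v ∈ U \ P, f v := by
    have hP := sum_inter_add_sum_sdiff P U f
    rw [← h, ← sum_inter_add_sum_sdiff U P f, inter_comm] at hP
    exact add_left_cancel hP
  have hnonneg : ∀ v ∈ P \ U, 0 ≤ f v := fun v hv => (mem_filter.1 (mem_sdiff.1 hv).1).2.le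
  have hnonpos : ∀ v ∈ U \ P, f v ≤ 0 := fun v hv =>
    not_lt.1 fun hpos => (mem_sdiff.1 hv).2 (mem_filter.2 ⟨mem_univ v, hpos⟩)
  have hzero : ∑ v ∈ P \ U, f v = 0 :=
    le_antisymm (hswap ▸ sum_nonpos hnonpos) (sum_nonneg hnonneg)
  refine ⟨fun v hvP => ?_, fun v hvU hv => ?_⟩
  · by_contra hvU
    have := (sum_eq_zero_iff_of_nonneg hnonneg).1 hzero v (mem_sdiff.2 ⟨hvP, hvU⟩)
    exact (mem_filter.1 hvP).2.ne' this
  · exact (sum_eq_zero_iff_of_nonpos hnonpos).1 (hswap ▸ hzero) v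
      (mem_sdiff.2 ⟨hvU, fun hvP => hv (mem_filter.1 hvP).2⟩)

theorem Fin.sum_cons_eq_cons_sum {ι M : Type*} [AddCommMonoid M] {n : ℕ} (s : Finset ι) (x : ι → M)
    (y : ι → Fin n → M) :
    ∑ k ∈ s, (Fin.cons (x k) (y k) : Fin (n + 1) → M) = Fin.cons (∑ k ∈ s, x k) (∑ k ∈ s, y k) := by
  ext j
  cases j using Fin.cases <;> simp [Finset.sum_apply]

theorem Fin.tail_sum {ι M : Type*} [AddCommMonoid M] {n : ℕ} (s : Finset ι)
    (y : ι → Fin (n + 1) → M) :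
    Fin.tail (∑ k ∈ s, y k) = ∑ k ∈ s, Fin.tail (y k) := by
  ext j
  simp [Fin.tail, Finset.sum_apply]

theorem toVec_cons {n : ℕ} (a : Bool) (u : Fin n → Bool) :
    toVec (Fin.cons a u : Fin (n + 1) → Bool) = Fin.cons (if a then 1 else 0) (toVec u) := by
  ext j
  cases j using Fin.cases <;> simp [toVec]

theorem sum_toVec_apply {n : ℕ} (u : Fin n → Bool) : ∑ i, toVec u i = #{i | u i = true} := by
  simp [toVec, sum_boole]

section Pairing

variable {d : ℕ}

/-- `⟨w, v⟩` for `v ∈ {0,1}^(d+1)`, spelled exactly as in `zVec` so that `zVec_eq_sum` is `rfl`. -/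
def wInner (d : ℕ) (v : Fin (d + 1) → Bool) : ℤ :=
  ∑ i, wVec d i * (if v i then 1 else 0)

theorem zVec_eq_sum : zVec d = ∑ v with 0 < wInner d v, toVec v := rfl

theorem wInner_cons (a : Bool) (u : Fin d → Bool) :
    wInner d (Fin.cons a u) = #{i | u i = true} - if a then 3 else 0 := by
  cases a <;> simp [wInner, wVec, Fin.sum_univ_succ, Fin.succ_ne_zero, sum_boole]
  ring

theorem wInner_cons_true_eq_zero_iff (u : Fin d → Bool) :
    wInner d (Fin.cons true u) = 0 ↔ #{i | u i = true} = 3 := by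
  rw [wInner_cons, if_pos rfl]; omega

theorem toVec_eq_zero_of_wInner_eq_zero {v : Fin (d + 1) → Bool} (hv : wInner d v = 0)
    (h0 : v 0 = false) : toVec v = 0 := by
  rw [← Fin.cons_self_tail v, h0, wInner_cons] at hv
  rw [← Fin.cons_self_tail v, h0, toVec_cons]
  ext j
  cases j using Fin.cases <;> simp_all [toVec]

theorem cast_wInner (v : Fin (d + 1) → Bool) :
    (wInner d v : ℝ) = (fun i => (wVec d i : ℝ)) ⬝ᵥ toVec v := by
  simp [wInner, dotProduct, toVec]

theorem wVec_dotProduct_cons_sum_div_three (β : Fin d → ℝ) :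
    (fun i => (wVec d i : ℝ)) ⬝ᵥ Fin.cons ((∑ i, β i) / 3) β = 0 := by
  simp [dotProduct, Fin.sum_univ_succ, wVec, Fin.succ_ne_zero]
  ring

end Pairing

section Shift

variable {d : ℕ} {a : ℝ} {β : Fin d → ℝ}

theorem shifted_mem_degSeqs_of_threeUniform {U : Finset (Fin d → Bool)}
    (hU : ∀ u ∈ U, #{i | u i = true} = 3) (hβ : β = ∑ u ∈ U, toVec u) :
    zVec d + Fin.cons ((∑ i, β i) / 3) β ∈ degSeqs (d + 1) := by
  have hdisj : Disjoint ({v | 0 < wInner d v} : Finset _)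
      (U.image (Fin.cons (α := fun _ => Bool) true)) := by
    refine disjoint_right.2 fun v hv hpos => ?_
    obtain ⟨u, hu, rfl⟩ := mem_image.1 hv
    exact (mem_filter.1 hpos).2.ne' ((wInner_cons_true_eq_zero_iff u).2 (hU u hu))
  have hmass : ∑ i, β i = 3 * #U := by
    simp_rw [hβ, Finset.sum_apply]
    rw [sum_comm, sum_congr rfl fun u hu => by rw [sum_toVec_apply, hU u hu]]
    simp only [sum_const, nsmul_eq_mul, Nat.cast_ofNat]
    ring
  refine ⟨({v | 0 < wInner d v} : Finset _) ∪ U.image (Fin.cons (α := fun _ => Bool) true), ?_⟩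
  rw [sum_union hdisj, sum_image (Fin.cons_right_injective (α := fun _ => Bool) true).injOn,
    ← zVec_eq_sum]
  simp_rw [toVec_cons, if_true]
  rw [Fin.sum_cons_eq_cons_sum, ← hβ, hmass]
  simp

theorem exists_sum_toVec_eq_of_add_mem_degSeqs {p : Fin (d + 1) → ℝ}
    (h : zVec d + p ∈ degSeqs (d + 1)) (hp : (fun i => (wVec d i : ℝ)) ⬝ᵥ p = 0) :
    ∃ T : Finset (Fin (d + 1) → Bool), (∀ v ∈ T, wInner d v = 0) ∧ ∑ v ∈ T, toVec v = p := by
  classical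
  obtain ⟨W, hW⟩ := h
  set P : Finset (Fin (d + 1) → Bool) := {v | 0 < wInner d v}
  have hsum : ∑ v ∈ W, wInner d v = ∑ v ∈ P, wInner d v := by
    have : ((∑ v ∈ W, wInner d v : ℤ) : ℝ) = ((∑ v ∈ P, wInner d v : ℤ) : ℝ) := by
      simp_rw [Int.cast_sum, cast_wInner, ← dotProduct_sum, ← hW, dotProduct_add, hp, add_zero]
      rfl
    exact_mod_cast this
  obtain ⟨hPW, hzero⟩ := subset_and_eq_zero_of_sum_eq_sum_filter_pos (wInner d) hsum
  refine ⟨W \ P, fun v hv => ?_, ?_⟩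
  · obtain ⟨hvW, hvP⟩ := mem_sdiff.1 hv
    exact hzero v hvW fun hpos => hvP (mem_filter.2 ⟨mem_univ v, hpos⟩)
  · have hsplit : ∑ v ∈ W \ P, toVec v + zVec d = ∑ v ∈ W, toVec v := sum_sdiff hPW
    rw [← hW] at hsplit
    exact add_right_cancel (hsplit.trans (add_comm _ _))

theorem exists_threeUniform_of_sum_toVec_eq {T : Finset (Fin (d + 1) → Bool)}
    (hT0 : ∀ v ∈ T, wInner d v = 0) (hT : ∑ v ∈ T, toVec v = Fin.cons a β) :
    ∃ U : Finset (Fin d → Bool), (∀ u ∈ U, #{i | u i = true} = 3) ∧ β = ∑ u ∈ U, toVec u := by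
  refine ⟨(T.filter (· 0 = true)).image Fin.tail, fun u hu => ?_, ?_⟩
  · obtain ⟨v, hv, rfl⟩ := mem_image.1 hu
    obtain ⟨hvT, hv0⟩ := mem_filter.1 hv
    have := hT0 v hvT
    rwa [← Fin.cons_self_tail v, hv0, wInner_cons_true_eq_zero_iff] at this
  have htail : Set.InjOn Fin.tail (T.filter (· 0 = true) : Set (Fin (d + 1) → Bool)) := by
    intro v hv v' hv' h
    rw [← Fin.cons_self_tail v, ← Fin.cons_self_tail v', h, (mem_filter.1 hv).2,
      (mem_filter.1 hv').2]
  have hnull : ∀ v ∈ T, toVec v ≠ 0 → v 0 = true := fun v hv hne =>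
    by_contra fun h0 => hne (toVec_eq_zero_of_wInner_eq_zero (hT0 v hv) (Bool.eq_false_iff.2 h0))
  calc β = Fin.tail (∑ v ∈ T, toVec v) := by rw [hT]; rfl
    _ = ∑ v ∈ T with v 0 = true, Fin.tail (toVec v) := by
      rw [← sum_filter_of_ne hnull, Fin.tail_sum]
    _ = _ := by rw [sum_image htail]; rfl

end Shift

theorem three_uniform_iff_shifted_degSeq_general (d : ℕ) (b : Fin d → ℕ) :
    (∃ U : Finset (Fin d → Bool),
        (∀ v ∈ U, (Finset.univ.filter fun i => v i = true).card = 3) ∧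
        (fun i => (b i : ℝ)) = ∑ v ∈ U, toVec v) ↔
    (fun j => zVec d j +
        (Fin.cons ((∑ i, (b i : ℝ)) / 3) (fun i => (b i : ℝ)) : Fin (d + 1) → ℝ) j)
      ∈ degSeqs (d + 1) := by
  constructor
  · rintro ⟨U, hU, hb⟩
    exact shifted_mem_degSeqs_of_threeUniform hU hb
  · intro h
    obtain ⟨T, hT0, hT⟩ :=
      exists_sum_toVec_eq_of_add_mem_degSeqs h (wVec_dotProduct_cons_sum_div_three _)
    exact exists_threeUniform_of_sum_toVec_eq hT0 hT

/-- A vector `b ∈ ℕ^d` with `3 ∣ ‖b‖₁` is the degree sequence of a 3-uniform hypergraph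
if and only if `z + (‖b‖₁/3, b)` is a degree sequence in dimension `d+1`. -/
theorem three_uniform_iff_shifted_degSeq (d : ℕ) (hd : 1 ≤ d) (b : Fin d → ℕ)
    (hb : 3 ∣ ∑ i, b i) :
    (∃ U : Finset (Fin d → Bool),
        (∀ v ∈ U, (Finset.univ.filter fun i => v i = true).card = 3) ∧
        (fun i => (b i : ℝ)) = ∑ v ∈ U, toVec v) ↔
    (fun j => zVec d j +
        (Fin.cons ((∑ i, (b i : ℝ)) / 3) (fun i => (b i : ℝ)) : Fin (d + 1) → ℝ) j)
      ∈ degSeqs (d + 1) :=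
  three_uniform_iff_shifted_degSeq_general d b
end

section
/- Let d = C(8,2) + C(8,4) = 98 and let v_1, …, v_8 ∈ {0,1}^d be the rows of the 8 × d matrix B whose first C(8,2) columns are all vectors in {0,1}^8 with exactly two ones and whose remaining C(8,4) columns are all vectors in {0,1}^8 with exactly four ones. Let b := (1/2)(v_1 + v_2 + ⋯ + v_8), the integer vector whose first C(8,2) coordinates equal 1 and whose remaining C(8,4) coordinates equal 2. Then b cannot be written as a sum of a set of pairwise distinct vectors from {v_1, …, v_8}; in particular, b is not a sum of pairwise distinct 0/1 vectors lying in the linear span of {v_1, …, v_8}. -/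
/-!
Write a vector of the span as `v = ∑ aₖ vₖ`, so that its coordinate at a column `c ⊆ {1, …, 8}`
is `∑_{k ∈ c} aₖ`. If these sums are `0` or `1` on all 2- and 4-subsets, then every `aₖ` is `0`
or `1`: a pair with sum `1` forces every disjoint pair to sum to `0`, and three coordinates with
pairwise sums `0` vanish. Summing over `T` and reading off the coordinates of `b` at the columns
`{i, j}` gives `Aᵢ + Aⱼ = 1` for the total coefficients `Aᵢ`, hence `A₁ = 1/2`; but `A₁` counts
the vectors of `T` whose first coefficient is `1`.
-/

open Finset

/-- The index set of the columns of the matrix `B`: all 0/1 vectors of length 8 with exactly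
two or exactly four ones.  There are `C(8,2) + C(8,4) = 98` such columns, so this index set
plays the role of `{1, …, d}` for `d = 98` (the order of the columns is immaterial). -/
def ColIdx : Type :=
  {c : Fin 8 → Bool // (Finset.univ.filter fun k => c k = true).card = 2 ∨
    (Finset.univ.filter fun k => c k = true).card = 4}

instance : Fintype ColIdx := by unfold ColIdx; infer_instance

/-- The `k`-th row of the matrix `B`, as a 0/1 vector in `ℝ^d` (`d = 98`). -/
noncomputable def rowVec (k : Fin 8) : ColIdx → ℝ :=
  fun c => if c.1 k then 1 else 0

/-- The vector `b = (1/2)(v₁ + ⋯ + v₈)`: its coordinates on the weight-2 columns are `1`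
and on the weight-4 columns are `2`. -/
noncomputable def bVec : ColIdx → ℝ :=
  (1 / 2 : ℝ) • ∑ k : Fin 8, rowVec k

section ZeroOne

variable {ι K : Type*} [DecidableEq ι] [Field K] {a : ι → K}

lemma exists_ne_notMem_notMem [Fintype ι] (s : Finset ι) (hs : #s + 2 ≤ Fintype.card ι) :
    ∃ l m, l ≠ m ∧ l ∉ s ∧ m ∉ s := by
  have : 1 < #(univ \ s) := by
    rw [card_sdiff_of_subset (subset_univ s), card_univ]; omega
  obtain ⟨l, m, hl, hm, hlm⟩ := one_lt_card_iff.mp this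
  exact ⟨l, m, hlm, (mem_sdiff.mp hl).2, (mem_sdiff.mp hm).2⟩

lemma eq_zero_of_add_eq_zero [NeZero (2 : K)] {x y z : K} (hxy : x + y = 0) (hxz : x + z = 0)
    (hyz : y + z = 0) : x = 0 := by
  have : (2 : K) * x = 0 := by linear_combination hxy + hxz - hyz
  exact (mul_eq_zero.mp this).resolve_left two_ne_zero

variable (hsum : ∀ s : Finset ι, (#s = 2 ∨ #s = 4) → ∑ k ∈ s, a k = 0 ∨ ∑ k ∈ s, a k = 1)
include hsum

lemma add_eq_zero_or_eq_one_of_sum {i j : ι} (hij : i ≠ j) : a i + a j = 0 ∨ a i + a j = 1 := by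
  simpa [sum_pair hij] using hsum {i, j} (Or.inl (card_pair hij))

lemma eq_zero_of_add_eq_one [Fintype ι] [NeZero (2 : K)] (hι : 5 ≤ Fintype.card ι) {i j k : ι}
    (hij : i ≠ j) (hone : a i + a j = 1) (hki : k ≠ i) (hkj : k ≠ j) : a k = 0 := by
  have hdisjoint : ∀ l m, l ≠ m → l ∉ ({i, j} : Finset ι) → m ∉ ({i, j} : Finset ι) →
      a l + a m = 0 := by
    intro l m hlm hl hm
    have hl' : l ∉ insert m ({i, j} : Finset ι) := by simp_all
    have hquad := hsum _ (Or.inr (by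
      rw [card_insert_of_notMem hl', card_insert_of_notMem hm, card_pair hij]))
    rw [sum_insert hl', sum_insert hm, sum_pair hij, hone] at hquad
    refine (add_eq_zero_or_eq_one_of_sum hsum hlm).resolve_right fun h => ?_
    rcases hquad with h4 | h4
    · exact two_ne_zero (by linear_combination h4 - h : (2 : K) = 0)
    · exact one_ne_zero (by linear_combination h4 - h : (1 : K) = 0)
  obtain ⟨l, m, hlm, hl, hm⟩ := exists_ne_notMem_notMem {k, i, j} (by
    have := card_le_three (a := k) (b := i) (c := j); omega)
  simp only [mem_insert, mem_singleton, not_or] at hl hm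
  exact eq_zero_of_add_eq_zero
    (hdisjoint k l (Ne.symm hl.1) (by simp [hki, hkj]) (by simp [hl.2]))
    (hdisjoint k m (Ne.symm hm.1) (by simp [hki, hkj]) (by simp [hm.2]))
    (hdisjoint l m hlm (by simp [hl.2]) (by simp [hm.2]))

theorem eq_zero_or_eq_one_of_sum [Fintype ι] [NeZero (2 : K)] (hι : 5 ≤ Fintype.card ι) (i : ι) :
    a i = 0 ∨ a i = 1 := by
  by_cases hone : ∃ j k, j ≠ k ∧ a j + a k = 1
  · obtain ⟨j, k, hjk, hjk1⟩ := hone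
    obtain ⟨l, -, -, hl, -⟩ := exists_ne_notMem_notMem {i, j, k} (by
      have := card_le_three (a := i) (b := j) (c := k); omega)
    simp only [mem_insert, mem_singleton, not_or] at hl
    have hl0 := eq_zero_of_add_eq_one hsum hι hjk hjk1 hl.2.1 hl.2.2
    simpa [hl0] using add_eq_zero_or_eq_one_of_sum hsum (Ne.symm hl.1)
  · push Not at hone
    have hzero : ∀ j k, j ≠ k → a j + a k = 0 := fun j k hjk =>
      (add_eq_zero_or_eq_one_of_sum hsum hjk).resolve_right (hone j k hjk)
    obtain ⟨l, m, hlm, hl, hm⟩ := exists_ne_notMem_notMem {i} (by simp; omega)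
    simp only [mem_singleton] at hl hm
    exact Or.inl (eq_zero_of_add_eq_zero (hzero i l (Ne.symm hl)) (hzero i m (Ne.symm hm))
      (hzero l m hlm))

end ZeroOne

def ColIdx.ones (c : ColIdx) : Finset (Fin 8) := {k | c.1 k}

def ColIdx.ofFinset (s : Finset (Fin 8)) (hs : #s = 2 ∨ #s = 4) : ColIdx :=
  Subtype.mk (fun k => decide (k ∈ s)) (by simpa using hs)

@[simp] lemma ColIdx.ones_ofFinset (s : Finset (Fin 8)) (hs : #s = 2 ∨ #s = 4) :
    (ColIdx.ofFinset s hs).ones = s := by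
  ext k; simp [ColIdx.ones, ColIdx.ofFinset]

lemma rowVec_apply (k : Fin 8) (c : ColIdx) : rowVec k c = if k ∈ c.ones then 1 else 0 := by
  simp [rowVec, ColIdx.ones]

lemma rowVec_eq_zero_or_eq_one (k : Fin 8) (c : ColIdx) : rowVec k c = 0 ∨ rowVec k c = 1 := by
  rw [rowVec_apply]; split_ifs <;> simp

lemma bVec_apply (c : ColIdx) : bVec c = #c.ones / 2 := by
  simp [bVec, rowVec_apply, Finset.sum_apply, div_eq_inv_mul]

lemma exists_coeff_of_mem_span {v : ColIdx → ℝ} (hv : v ∈ Submodule.span ℝ (Set.range rowVec)) :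
    ∃ a : Fin 8 → ℝ, ∀ c, v c = ∑ k ∈ c.ones, a k := by
  obtain ⟨a, rfl⟩ := (Submodule.mem_span_range_iff_exists_fun ℝ).mp hv
  exact ⟨a, fun c => by simp [Finset.sum_apply, rowVec_apply, Finset.sum_ite_mem]⟩

theorem not_exists_zero_one_mem_span_sum_eq_bVec :
    ¬ ∃ T : Finset (ColIdx → ℝ),
        (∀ v ∈ T, (∀ c, v c = 0 ∨ v c = 1) ∧ v ∈ Submodule.span ℝ (Set.range rowVec)) ∧
        bVec = ∑ v ∈ T, v := by
  rintro ⟨T, hT, hb⟩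
  choose! a ha using fun v hv => exists_coeff_of_mem_span (hT v hv).2
  have hcoef : ∀ v ∈ T, ∀ k, a v k = 0 ∨ a v k = 1 := fun v hv =>
    eq_zero_or_eq_one_of_sum (fun s hs => by simpa [ha v hv] using (hT v hv).1 (.ofFinset s hs))
      (by simp)
  have hpair : ∀ i j : Fin 8, i ≠ j → ∑ v ∈ T, a v i + ∑ v ∈ T, a v j = 1 := by
    intro i j hij
    have := congrFun hb (.ofFinset {i, j} (Or.inl (card_pair hij)))
    rw [bVec_apply, Finset.sum_apply, sum_congr rfl fun v hv => ha v hv _] at this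
    simpa [sum_pair hij, card_pair hij, sum_add_distrib] using this.symm
  have hcount : ∑ v ∈ T, a v 0 = #{v ∈ T | a v 0 = 1} := by
    rw [← sum_boole]
    exact sum_congr rfl fun v hv => by rcases hcoef v hv 0 with h | h <;> simp [h]
  have hhalf : 2 * (#{v ∈ T | a v 0 = 1} : ℝ) = 1 := by
    rw [← hcount]
    linear_combination hpair 0 1 (by decide) + hpair 0 2 (by decide) - hpair 1 2 (by decide)
  norm_cast at hhalf
  omega

/-- `b = (1/2)(v₁ + ⋯ + v₈)` is not a sum of a set of pairwise distinct vectors from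
`{v₁, …, v₈}`; in particular it is not a sum of a set of pairwise distinct 0/1 vectors
lying in the real linear span of `{v₁, …, v₈}`. -/
theorem bVec_not_sum_of_rows :
    (¬ ∃ T : Finset (ColIdx → ℝ), ↑T ⊆ Set.range rowVec ∧ bVec = ∑ v ∈ T, v) ∧
    (¬ ∃ T : Finset (ColIdx → ℝ),
        (∀ v ∈ T, (∀ c, v c = 0 ∨ v c = 1) ∧
          v ∈ Submodule.span ℝ (Set.range rowVec)) ∧
        bVec = ∑ v ∈ T, v) := by
  refine ⟨fun ⟨T, hT, hb⟩ => not_exists_zero_one_mem_span_sum_eq_bVec ⟨T, fun v hv => ?_, hb⟩,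
    not_exists_zero_one_mem_span_sum_eq_bVec⟩
  obtain ⟨k, rfl⟩ := hT hv
  exact ⟨rowVec_eq_zero_or_eq_one k, Submodule.subset_span (Set.mem_range_self k)⟩
end
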